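/- For every r ∈ ℂ, the subspace of U_0^{osp}(r) spanned by {E_i : i ∈ ℤ} is invariant under E, H, F and, as an sl(2)-module, is isomorphic to U_{−1,r} via the linear map sending E_i to the basis vector E_i of U_{−1,r}; and the subspace spanned by {E_{i−1/2} : i ∈ ℤ} is invariant under E, H, F and, as an sl(2)-module, is isomorphic to U_{0,r} via the linear map sending E_{i−1/2} to the basis vector E_i of U_{0,r}. Thus as an sl(2)-module U_0^{osp}(r) ≅ U_{−1,r} ⊕ U_{0,r}. -/

import Mathlib

/-!
The sl(2)-module `U_{μ,r}`: underlying space `ℤ →₀ ℂ` with basis `E i = single i 1`,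
and the `osp(1|2)`-module `U_0^{osp}(r)`: underlying space `(ℤ ⊕ ℤ) →₀ ℂ`, where
`Sum.inl i` encodes the basis vector `E_i` and `Sum.inr i` encodes `E_{i−1/2}`.
-/

/-- `e·E_i = E_{i−1}`. -/
noncomputable def eU : Module.End ℂ (ℤ →₀ ℂ) :=
  Finsupp.lift (ℤ →₀ ℂ) ℂ ℤ fun i => Finsupp.single (i - 1) 1

/-- `h·E_i = −(2r+2i−μ)·E_i`. -/
noncomputable def hU (μ r : ℂ) : Module.End ℂ (ℤ →₀ ℂ) :=
  Finsupp.lift (ℤ →₀ ℂ) ℂ ℤ fun i =>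
    (-(2 * r + 2 * (i : ℂ) - μ)) • Finsupp.single i 1

/-- `f·E_i = −(r+i+1)(r+i−μ)·E_{i+1}`. -/
noncomputable def fU (μ r : ℂ) : Module.End ℂ (ℤ →₀ ℂ) :=
  Finsupp.lift (ℤ →₀ ℂ) ℂ ℤ fun i =>
    (-((r + (i : ℂ) + 1) * (r + (i : ℂ) - μ))) • Finsupp.single (i + 1) 1

/-- `E·E_i = E_{i−1}`, `E·E_{i−1/2} = E_{i−3/2}`. -/
noncomputable def Eosp : Module.End ℂ ((ℤ ⊕ ℤ) →₀ ℂ) :=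
  Finsupp.lift ((ℤ ⊕ ℤ) →₀ ℂ) ℂ (ℤ ⊕ ℤ)
    (Sum.elim (fun i => Finsupp.single (Sum.inl (i - 1)) 1)
              (fun i => Finsupp.single (Sum.inr (i - 1)) 1))

/-- `H·E_i = −(2i+2r+1)·E_i`, `H·E_{i−1/2} = −(2i+2r)·E_{i−1/2}`. -/
noncomputable def Hosp (r : ℂ) : Module.End ℂ ((ℤ ⊕ ℤ) →₀ ℂ) :=
  Finsupp.lift ((ℤ ⊕ ℤ) →₀ ℂ) ℂ (ℤ ⊕ ℤ)
    (Sum.elim (fun i => (-(2 * (i : ℂ) + 2 * r + 1)) • Finsupp.single (Sum.inl i) 1)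
              (fun i => (-(2 * (i : ℂ) + 2 * r)) • Finsupp.single (Sum.inr i) 1))

/-- `F·E_i = −(r+i+1)²·E_{i+1}`, `F·E_{i−1/2} = −(r+i+1)(r+i)·E_{i+1/2}`. -/
noncomputable def Fosp (r : ℂ) : Module.End ℂ ((ℤ ⊕ ℤ) →₀ ℂ) :=
  Finsupp.lift ((ℤ ⊕ ℤ) →₀ ℂ) ℂ (ℤ ⊕ ℤ)
    (Sum.elim
      (fun i => (-((r + (i : ℂ) + 1) ^ 2)) • Finsupp.single (Sum.inl (i + 1)) 1)
      (fun i => (-((r + (i : ℂ) + 1) * (r + (i : ℂ)))) • Finsupp.single (Sum.inr (i + 1)) 1))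

/-- `X·E_i = E_{i−1/2}`, `X·E_{i−1/2} = E_{i−1}`. -/
noncomputable def Xosp : Module.End ℂ ((ℤ ⊕ ℤ) →₀ ℂ) :=
  Finsupp.lift ((ℤ ⊕ ℤ) →₀ ℂ) ℂ (ℤ ⊕ ℤ)
    (Sum.elim (fun i => Finsupp.single (Sum.inr i) 1)
              (fun i => Finsupp.single (Sum.inl (i - 1)) 1))

/-- `Y·E_i = −(r+i+1)·E_{i+1/2}`, `Y·E_{i−1/2} = −(r+i)·E_i`. -/
noncomputable def Yosp (r : ℂ) : Module.End ℂ ((ℤ ⊕ ℤ) →₀ ℂ) :=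
  Finsupp.lift ((ℤ ⊕ ℤ) →₀ ℂ) ℂ (ℤ ⊕ ℤ)
    (Sum.elim (fun i => (-(r + (i : ℂ) + 1)) • Finsupp.single (Sum.inr (i + 1)) 1)
              (fun i => (-(r + (i : ℂ))) • Finsupp.single (Sum.inl i) 1))


/-- The subspace of `U_0^{osp}(r)` spanned by the integer-indexed basis `{E_i}`. -/
noncomputable def Wint : Submodule ℂ ((ℤ ⊕ ℤ) →₀ ℂ) :=
  Submodule.span ℂ
    (Set.range fun i : ℤ => (Finsupp.single (Sum.inl i : ℤ ⊕ ℤ) 1 : (ℤ ⊕ ℤ) →₀ ℂ))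

/-- The subspace of `U_0^{osp}(r)` spanned by the half-integer-indexed basis `{E_{i−1/2}}`. -/
noncomputable def Whalf : Submodule ℂ ((ℤ ⊕ ℤ) →₀ ℂ) :=
  Submodule.span ℂ
    (Set.range fun i : ℤ => (Finsupp.single (Sum.inr i : ℤ ⊕ ℤ) 1 : (ℤ ⊕ ℤ) →₀ ℂ))

/-- The linear map sending `E_i ↦ E_i` and `E_{i−1/2} ↦ 0`. -/
noncomputable def Tint : ((ℤ ⊕ ℤ) →₀ ℂ) →ₗ[ℂ] (ℤ →₀ ℂ) :=
  Finsupp.lift (ℤ →₀ ℂ) ℂ (ℤ ⊕ ℤ)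
    (Sum.elim (fun i => Finsupp.single i 1) (fun _ => 0))

/-- The linear map sending `E_{i−1/2} ↦ E_i` and `E_i ↦ 0`. -/
noncomputable def Thalf : ((ℤ ⊕ ℤ) →₀ ℂ) →ₗ[ℂ] (ℤ →₀ ℂ) :=
  Finsupp.lift (ℤ →₀ ℂ) ℂ (ℤ ⊕ ℤ)
    (Sum.elim (fun _ => 0) (fun i => Finsupp.single i 1))

/-!
Both subspaces are images of the coordinate embeddings `lmapDomain Sum.inl` and
`lmapDomain Sum.inr` of `ℤ →₀ ℂ`, which intertwine `e, h, f` (at `μ = -1`, resp. `μ = 0`) with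
`E, H, F`, and `Tint`, `Thalf` are left inverses of these embeddings. An intertwining embedding
with a left inverse identifies its source with its image, and the two images are complementary
because `Sum.inl` and `Sum.inr` have complementary ranges.
-/

section LeftInverse

variable {R M N : Type*} [Semiring R] [AddCommMonoid M] [AddCommMonoid N] [Module R M]
  [Module R N] {J : N →ₗ[R] M} {T : M →ₗ[R] N}

theorem LinearMap.bijective_domRestrict_range_of_comp_eq_id (hTJ : T ∘ₗ J = LinearMap.id) :
    Function.Bijective (T.domRestrict (LinearMap.range J)) :=
  (LinearEquiv.ofLeftInverse (g := T) (LinearMap.congr_fun hTJ)).symm.bijective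

theorem LinearMap.apply_mem_range_of_comp_eq_comp {A : Module.End R M} {a : Module.End R N}
    (hA : A ∘ₗ J = J ∘ₗ a) {v : M} (hv : v ∈ LinearMap.range J) :
    A v ∈ LinearMap.range J := by
  obtain ⟨w, rfl⟩ := hv
  exact ⟨a w, (LinearMap.congr_fun hA w).symm⟩

theorem LinearMap.apply_apply_of_comp_eq_comp (hTJ : T ∘ₗ J = LinearMap.id)
    {A : Module.End R M} {a : Module.End R N} (hA : A ∘ₗ J = J ∘ₗ a) {v : M}
    (hv : v ∈ LinearMap.range J) : T (A v) = a (T v) := by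
  obtain ⟨w, rfl⟩ := hv
  have hTJw (u : N) : T (J u) = u := LinearMap.congr_fun hTJ u
  rw [← LinearMap.comp_apply A, hA, LinearMap.comp_apply, hTJw, hTJw]

end LeftInverse

section FinsuppLift

variable {R X M : Type*} [Semiring R] [AddCommMonoid M] [Module R M]

theorem Finsupp.lift_apply_single (f : X → M) (x : X) (c : R) :
    Finsupp.lift M R X f (Finsupp.single x c) = c • f x := by
  rw [Finsupp.lift_apply, Finsupp.sum_single_index (zero_smul R (f x))]

theorem Finsupp.lhom_ext_single_one {φ ψ : (X →₀ R) →ₗ[R] M}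
    (h : ∀ x, φ (Finsupp.single x 1) = ψ (Finsupp.single x 1)) : φ = ψ :=
  Finsupp.basisSingleOne.ext fun x => by simpa only [Finsupp.coe_basisSingleOne] using h x

end FinsuppLift

theorem Wint_eq_range :
    Wint = LinearMap.range (Finsupp.lmapDomain ℂ ℂ (Sum.inl : ℤ → ℤ ⊕ ℤ)) :=
  (Finsupp.range_lmapDomain Sum.inl).symm

theorem Whalf_eq_range :
    Whalf = LinearMap.range (Finsupp.lmapDomain ℂ ℂ (Sum.inr : ℤ → ℤ ⊕ ℤ)) :=
  (Finsupp.range_lmapDomain Sum.inr).symm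

theorem isCompl_Wint_Whalf : IsCompl Wint Whalf := by
  rw [Wint_eq_range]
  exact Finsupp.isCompl_range_lmapDomain_span Set.isCompl_range_inl_range_inr

section Intertwining

open Finsupp

local notation "Jint" => lmapDomain ℂ ℂ (Sum.inl : ℤ → ℤ ⊕ ℤ)
local notation "Jhalf" => lmapDomain ℂ ℂ (Sum.inr : ℤ → ℤ ⊕ ℤ)

theorem Tint_comp_lmapDomain_inl : Tint ∘ₗ Jint = LinearMap.id :=
  lhom_ext_single_one fun i => by
    simp only [LinearMap.comp_apply, lmapDomain_apply, mapDomain_single, LinearMap.id_apply,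
      Tint, lift_apply_single, Sum.elim_inl, one_smul]

theorem Thalf_comp_lmapDomain_inr : Thalf ∘ₗ Jhalf = LinearMap.id :=
  lhom_ext_single_one fun i => by
    simp only [LinearMap.comp_apply, lmapDomain_apply, mapDomain_single, LinearMap.id_apply,
      Thalf, lift_apply_single, Sum.elim_inr, one_smul]

theorem Eosp_comp_lmapDomain_inl : Eosp ∘ₗ Jint = Jint ∘ₗ eU :=
  lhom_ext_single_one fun i => by
    simp only [LinearMap.comp_apply, lmapDomain_apply, mapDomain_single,
      Eosp, eU, lift_apply_single, Sum.elim_inl, one_smul]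

theorem Hosp_comp_lmapDomain_inl (r : ℂ) : Hosp r ∘ₗ Jint = Jint ∘ₗ hU (-1) r :=
  lhom_ext_single_one fun i => by
    simp only [LinearMap.comp_apply, lmapDomain_apply, mapDomain_single,
      Hosp, hU, lift_apply_single, Sum.elim_inl, one_smul, map_smul]
    congr 1
    ring

theorem Fosp_comp_lmapDomain_inl (r : ℂ) : Fosp r ∘ₗ Jint = Jint ∘ₗ fU (-1) r :=
  lhom_ext_single_one fun i => by
    simp only [LinearMap.comp_apply, lmapDomain_apply, mapDomain_single,
      Fosp, fU, lift_apply_single, Sum.elim_inl, one_smul, map_smul]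
    congr 1
    ring

theorem Eosp_comp_lmapDomain_inr : Eosp ∘ₗ Jhalf = Jhalf ∘ₗ eU :=
  lhom_ext_single_one fun i => by
    simp only [LinearMap.comp_apply, lmapDomain_apply, mapDomain_single,
      Eosp, eU, lift_apply_single, Sum.elim_inr, one_smul]

theorem Hosp_comp_lmapDomain_inr (r : ℂ) : Hosp r ∘ₗ Jhalf = Jhalf ∘ₗ hU 0 r :=
  lhom_ext_single_one fun i => by
    simp only [LinearMap.comp_apply, lmapDomain_apply, mapDomain_single,
      Hosp, hU, lift_apply_single, Sum.elim_inr, one_smul, map_smul]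
    congr 1
    ring

theorem Fosp_comp_lmapDomain_inr (r : ℂ) : Fosp r ∘ₗ Jhalf = Jhalf ∘ₗ fU 0 r :=
  lhom_ext_single_one fun i => by
    simp only [LinearMap.comp_apply, lmapDomain_apply, mapDomain_single,
      Fosp, fU, lift_apply_single, Sum.elim_inr, one_smul, map_smul]
    congr 1
    ring

end Intertwining

/-- The span of `{E_i}` in `U_0^{osp}(r)` is invariant under `E, H, F` and isomorphic,
as an sl(2)-module, to `U_{−1,r}` via `E_i ↦ E_i`; the span of `{E_{i−1/2}}` is invariant
under `E, H, F` and isomorphic, as an sl(2)-module, to `U_{0,r}` via `E_{i−1/2} ↦ E_i`.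
Together the two subspaces decompose `U_0^{osp}(r)` as a direct sum, so that
`U_0^{osp}(r) ≅ U_{−1,r} ⊕ U_{0,r}` as sl(2)-modules. -/
theorem U0osp_sl2_decomposition (r : ℂ) :
    (∀ v ∈ Wint, Eosp v ∈ Wint ∧ Hosp r v ∈ Wint ∧ Fosp r v ∈ Wint) ∧
    Function.Bijective (Tint.domRestrict Wint) ∧
    (∀ v ∈ Wint,
      Tint (Eosp v) = eU (Tint v) ∧
      Tint (Hosp r v) = hU (-1) r (Tint v) ∧
      Tint (Fosp r v) = fU (-1) r (Tint v)) ∧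
    (∀ v ∈ Whalf, Eosp v ∈ Whalf ∧ Hosp r v ∈ Whalf ∧ Fosp r v ∈ Whalf) ∧
    Function.Bijective (Thalf.domRestrict Whalf) ∧
    (∀ v ∈ Whalf,
      Thalf (Eosp v) = eU (Thalf v) ∧
      Thalf (Hosp r v) = hU 0 r (Thalf v) ∧
      Thalf (Fosp r v) = fU 0 r (Thalf v)) ∧
    Wint ⊔ Whalf = ⊤ ∧ Wint ⊓ Whalf = ⊥ := by
  open LinearMap in
  have hcompl := isCompl_Wint_Whalf
  have hTint := Tint_comp_lmapDomain_inl
  have hThalf := Thalf_comp_lmapDomain_inr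
  rw [Wint_eq_range, Whalf_eq_range] at hcompl ⊢
  refine ⟨fun v hv => ⟨?_, ?_, ?_⟩, bijective_domRestrict_range_of_comp_eq_id hTint,
    fun v hv => ⟨?_, ?_, ?_⟩, fun v hv => ⟨?_, ?_, ?_⟩,
    bijective_domRestrict_range_of_comp_eq_id hThalf, fun v hv => ⟨?_, ?_, ?_⟩,
    hcompl.sup_eq_top, hcompl.inf_eq_bot⟩
  · exact apply_mem_range_of_comp_eq_comp Eosp_comp_lmapDomain_inl hv
  · exact apply_mem_range_of_comp_eq_comp (Hosp_comp_lmapDomain_inl r) hv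
  · exact apply_mem_range_of_comp_eq_comp (Fosp_comp_lmapDomain_inl r) hv
  · exact apply_apply_of_comp_eq_comp hTint Eosp_comp_lmapDomain_inl hv
  · exact apply_apply_of_comp_eq_comp hTint (Hosp_comp_lmapDomain_inl r) hv
  · exact apply_apply_of_comp_eq_comp hTint (Fosp_comp_lmapDomain_inl r) hv
  · exact apply_mem_range_of_comp_eq_comp Eosp_comp_lmapDomain_inr hv
  · exact apply_mem_range_of_comp_eq_comp (Hosp_comp_lmapDomain_inr r) hv
  · exact apply_mem_range_of_comp_eq_comp (Fosp_comp_lmapDomain_inr r) hv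
  · exact apply_apply_of_comp_eq_comp hThalf Eosp_comp_lmapDomain_inr hv
  · exact apply_apply_of_comp_eq_comp hThalf (Hosp_comp_lmapDomain_inr r) hv
  · exact apply_apply_of_comp_eq_comp hThalf (Fosp_comp_lmapDomain_inr r) hv
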